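/- arXiv:1002.2752 — 4 statements merged into one kernel-verified Lean document; each statement's English description precedes it below -/
import Mathlib

section
/- Yang's Lagrange identity for Laurent polynomials: for all x, y ∈ E = A⁴, N(x ∘ y) = N(x) N(y). -/
open LaurentPolynomial

/-- `A = ℤ[z, z⁻¹]`, the Laurent polynomial ring over the integers. -/
abbrev A : Type := LaurentPolynomial ℤ

/-- The conjugation `f(z) ↦ f(z⁻¹)` on `A`. -/
noncomputable def conj : A →+* A := (LaurentPolynomial.invert (R := ℤ)).toRingEquiv.toRingHom

/-- The fixed subring `A₀ = {f ∈ A | f* = f}`. -/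
noncomputable def A0 : Subring A := RingHom.eqLocus conj (RingHom.id A)

/-- `E = A⁴`. -/
abbrev E : Type := Fin 4 → A

/-- The norm `N(x) = ∑ₖ xₖ xₖ*`. -/
noncomputable def N (x : E) : A := ∑ k, x k * conj (x k)

/-- The standard `A`-basis vectors of `E = A⁴`. -/
noncomputable def e (k : Fin 4) : E := Pi.single k 1

/-- Yang's multiplication `x ∘ y = (p, q, r, s)`. -/
noncomputable def yang (x y : E) : E :=
  ![x 0 * y 0 - x 1 * conj (y 1) - x 2 * conj (y 2) - x 3 * conj (y 3),
    x 0 * y 1 + x 1 * conj (y 0) + conj (x 2) * conj (y 3) - conj (x 3) * conj (y 2),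
    x 0 * y 2 - conj (x 1) * conj (y 3) + x 2 * conj (y 0) + conj (x 3) * conj (y 1),
    x 0 * y 3 + conj (x 1) * conj (y 2) - conj (x 2) * conj (y 1) + x 3 * conj (y 0)]

lemma conj_conj (a : A) : conj (conj a) = a :=
  LaurentPolynomial.involutive_invert a

lemma N_eq (x : E) :
    N x = x 0 * conj (x 0) + x 1 * conj (x 1) + x 2 * conj (x 2) + x 3 * conj (x 3) :=
  Fin.sum_univ_four _

/-- Yang's Lagrange identity for Laurent polynomials:
`N(x ∘ y) = N(x) N(y)` for all `x, y ∈ E = A⁴`. -/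
theorem yang_lagrange_identity : ∀ x y : E, N (yang x y) = N x * N y := by
  intro x y
  -- Pushing the involutive ring hom `conj` down to the coordinates leaves an identity between
  -- polynomials in the sixteen independent quantities `xₖ, xₖ*, yₖ, yₖ*`.
  simp only [N_eq, yang, Matrix.cons_val_zero, Matrix.cons_val_one, Matrix.head_cons,
    Matrix.cons_val_two, Matrix.tail_cons, Matrix.cons_val_three, map_add, map_sub, map_mul,
    conj_conj]
  ring
end

section
/- The set U₁' = {x ∈ A | x x* = −(z − z⁻¹)²} is equal to (z − z⁻¹)·U₁, i.e., it consists precisely of the elements (z − z⁻¹) u with u ∈ U₁. -/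
open LaurentPolynomial

/-!
Since `(z − z⁻¹)* = −(z − z⁻¹)` and `A` is a domain, `x = (z − z⁻¹) u` satisfies `x x* = −(z − z⁻¹)²`
exactly when `u u* = 1`. Conversely, if `x x* = −(z − z⁻¹)²`, evaluating at `z = ±1` (where
conjugation does nothing and `z − z⁻¹` vanishes) gives `x(±1)² = 0`, so `x` has the roots `±1` and
is divisible by `(z − 1)(z + 1) = z (z − z⁻¹)`.
-/

open Polynomial in
theorem Polynomial.mul_X_sub_C_dvd_of_isRoot {R : Type*} [CommRing R] [IsDomain R] {p : R[X]}
    {a b : R} (hab : a ≠ b) (ha : p.IsRoot a) (hb : p.IsRoot b) :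
    (X - C a) * (X - C b) ∣ p := by
  obtain ⟨q, rfl⟩ := dvd_iff_isRoot.mpr ha
  have hq : q.IsRoot b := by
    simpa [IsRoot, sub_ne_zero.mpr hab.symm] using hb
  exact mul_dvd_mul_left _ (dvd_iff_isRoot.mpr hq)

namespace LaurentPolynomial

theorem eval₂_invert {R S : Type*} [CommSemiring R] [CommSemiring S] (f : R →+* S) (x : Sˣ)
    (p : R[T;T⁻¹]) : eval₂ f x (invert p) = eval₂ f x⁻¹ p := by
  induction p using LaurentPolynomial.induction_on' with
  | add p q hp hq => simp only [map_add, hp, hq]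
  | C_mul_T n a => simp [zpow_neg]

theorem mul_T_one_sub_C_dvd_of_eval₂_eq_zero {R : Type*} [CommRing R] [IsDomain R]
    {f : R[T;T⁻¹]} {a b : Rˣ} (hab : a ≠ b) (ha : eval₂ (RingHom.id R) a f = 0)
    (hb : eval₂ (RingHom.id R) b f = 0) : (T 1 - C (a : R)) * (T 1 - C (b : R)) ∣ f := by
  obtain ⟨n, p, hp⟩ := f.exists_T_pow
  have isRoot (c : Rˣ) (hc : eval₂ (RingHom.id R) c f = 0) : p.IsRoot c := by
    simpa [hc] using congrArg (eval₂ (RingHom.id R) c) hp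
  have hdvd := Polynomial.mul_X_sub_C_dvd_of_isRoot (Units.val_injective.ne hab)
    (isRoot a ha) (isRoot b hb)
  rw [← (isUnit_T (n : ℤ)).dvd_mul_right, ← hp]
  simpa using map_dvd Polynomial.toLaurent hdvd

end LaurentPolynomial

theorem conj_apply (f : A) : conj f = invert f := rfl

theorem eval₂_conj (c : ℤˣ) (f : A) :
    eval₂ (RingHom.id ℤ) c (conj f) = eval₂ (RingHom.id ℤ) c f := by
  rw [conj_apply, eval₂_invert, Int.units_inv_eq_self]

theorem conj_T_one_sub_T_neg_one : conj (T 1 - T (-1)) = -(T 1 - T (-1)) := by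
  simp [conj_apply]

theorem T_one_sub_T_neg_one_ne_zero : (T 1 - T (-1) : A) ≠ 0 := fun h => by
  simpa using congrArg (fun f : A => f.coeff 1) h

theorem T_one_sub_T_neg_one_eq :
    (T 1 - T (-1) : A) = T (-1) * ((T 1 - C ((1 : ℤˣ) : ℤ)) * (T 1 - C ((-1 : ℤˣ) : ℤ))) := by
  have h : (T (-1) * T 1 : A) = 1 := by rw [← T_add]; rfl
  simp only [Units.val_one, Units.val_neg, map_one, map_neg]
  linear_combination (-T 1 : A) * h

theorem mul_conj_T_one_sub_T_neg_one_mul (u : A) :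
    (T 1 - T (-1)) * u * conj ((T 1 - T (-1)) * u) = -(T 1 - T (-1)) ^ 2 * (u * conj u) := by
  rw [map_mul, conj_T_one_sub_T_neg_one]
  ring

theorem T_one_sub_T_neg_one_dvd_of_mul_conj {x : A} (hx : x * conj x = -(T 1 - T (-1)) ^ 2) :
    T 1 - T (-1) ∣ x := by
  have eval₂_eq_zero (c : ℤˣ) : eval₂ (RingHom.id ℤ) c x = 0 := by
    simpa [eval₂_conj, zpow_neg, Int.units_inv_eq_self] using congrArg (eval₂ (RingHom.id ℤ) c) hx
  rw [T_one_sub_T_neg_one_eq]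
  exact (isUnit_T _).mul_left_dvd.mpr <|
    mul_T_one_sub_C_dvd_of_eval₂_eq_zero (by decide) (eval₂_eq_zero 1) (eval₂_eq_zero (-1))

/-- `U₁' = {x ∈ A | x x* = −(z − z⁻¹)²}` equals `(z − z⁻¹) U₁`. -/
theorem U1'_eq :
    {x : A | x * conj x = -(T 1 - T (-1)) ^ 2} =
      (fun u : A => (T 1 - T (-1)) * u) '' {u : A | u * conj u = 1} := by
  ext x
  constructor
  · intro hx
    obtain ⟨u, rfl⟩ := T_one_sub_T_neg_one_dvd_of_mul_conj hx
    refine ⟨u, mul_left_cancel₀ (neg_ne_zero.mpr (pow_ne_zero 2 T_one_sub_T_neg_one_ne_zero)) ?_, rfl⟩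
    rw [← mul_conj_T_one_sub_T_neg_one_mul, hx, mul_one]
  · rintro ⟨u, hu, rfl⟩
    rw [Set.mem_ofPred_eq, mul_conj_T_one_sub_T_neg_one_mul, hu, mul_one]
end

section
/- The unit sphere U₄ = {x ∈ E | N(x) = 1} is equal to ⋃_{k=0}^{3} U₁ eₖ; i.e., x ∈ E satisfies N(x) = 1 if and only if exactly one coordinate xₖ of x lies in U₁ and all other coordinates are zero. -/
/-!
Comparing constant coefficients, `N x = 1` gives `∑ₖ ∑ₙ (xₖ)ₙ² = 1`, because the constant
coefficient of `f f*` is the sum of the squares of the coefficients of `f`. These four inner sums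
are nonnegative integers that vanish only when `xₖ = 0`, so all coordinates but one vanish, and
then `N x = xₖ xₖ*`.
-/

open LaurentPolynomial

namespace LaurentPolynomial

variable {R : Type*}

theorem coeff_zero_mul_invert [CommSemiring R] (f : R[T;T⁻¹]) :
    (f * invert f).coeff 0 = f.coeff.sum fun _ r => r * r := by
  simp [AddMonoidAlgebra.coeff_mul_apply_left, Finsupp.sum]

variable [CommRing R] [LinearOrder R] [IsStrictOrderedRing R]

theorem coeff_zero_mul_invert_nonneg (f : R[T;T⁻¹]) : 0 ≤ (f * invert f).coeff 0 := by
  rw [coeff_zero_mul_invert]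
  exact Finset.sum_nonneg fun _ _ => mul_self_nonneg _

theorem coeff_zero_mul_invert_eq_zero_iff {f : R[T;T⁻¹]} :
    (f * invert f).coeff 0 = 0 ↔ f = 0 := by
  refine ⟨fun h => ?_, fun h => by simp [h]⟩
  rw [coeff_zero_mul_invert, Finsupp.sum,
    Finset.sum_eq_zero_iff_of_nonneg fun _ _ => mul_self_nonneg _] at h
  ext n
  by_contra hn
  exact hn (mul_self_eq_zero.mp (h n (Finsupp.mem_support_iff.mpr hn)))

end LaurentPolynomial

theorem exists_forall_ne_eq_zero_of_sum_eq_one {ι : Type*} [Fintype ι] {q : ι → ℤ}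
    (hq : ∀ i, 0 ≤ q i) (h : ∑ i, q i = 1) : ∃ k, ∀ j ≠ k, q j = 0 := by
  classical
  obtain ⟨k, -, hk⟩ := Finset.exists_ne_zero_of_sum_ne_zero (h ▸ one_ne_zero)
  refine ⟨k, fun j hj => ?_⟩
  have hsplit := Finset.add_sum_erase Finset.univ q (Finset.mem_univ k)
  have hj_le := Finset.single_le_sum (fun i _ => hq i) (Finset.mem_erase.2 ⟨hj, Finset.mem_univ j⟩)
  have hk_pos : 0 < q k := (hq k).lt_of_ne' hk
  linarith [hq j]

theorem N_eq_of_forall_ne_eq_zero {x : E} {k : Fin 4} (hx : ∀ j ≠ k, x j = 0) :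
    N x = x k * conj (x k) :=
  Finset.sum_eq_single k (fun j _ hj => by simp [hx j hj]) (by simp)

theorem N_eq_one_iff (x : E) : N x = 1 ↔ ∃ k, x k * conj (x k) = 1 ∧ ∀ j ≠ k, x j = 0 := by
  refine ⟨fun h => ?_, fun ⟨k, hk, hx⟩ => N_eq_of_forall_ne_eq_zero hx ▸ hk⟩
  have hsum : ∑ k, (x k * conj (x k)).coeff 0 = 1 := by
    simpa [N, AddMonoidAlgebra.coeff_sum] using congrArg (AddMonoidAlgebra.coeff · 0) h
  obtain ⟨k, hk⟩ := exists_forall_ne_eq_zero_of_sum_eq_one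
    (fun k => coeff_zero_mul_invert_nonneg (x k)) hsum
  have hx : ∀ j ≠ k, x j = 0 := fun j hj => coeff_zero_mul_invert_eq_zero_iff.mp (hk j hj)
  exact ⟨k, N_eq_of_forall_ne_eq_zero hx ▸ h, hx⟩

theorem mem_iUnion_image_smul_e_iff (S : Set A) (x : E) :
    x ∈ ⋃ k, (fun u : A => u • e k) '' S ↔ ∃ k, x k ∈ S ∧ ∀ j ≠ k, x j = 0 := by
  simp only [Set.mem_iUnion, Set.mem_image, e, ← Pi.single_smul', smul_eq_mul, mul_one]
  constructor
  · rintro ⟨k, u, hu, rfl⟩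
    exact ⟨k, by simpa using hu, fun j hj => by simp [hj]⟩
  · rintro ⟨k, hk, hx⟩
    refine ⟨k, x k, hk, funext fun j => ?_⟩
    by_cases hj : j = k
    · subst hj; simp
    · simp [hj, hx j hj]

/-- The unit sphere `U₄ = {x ∈ E | N(x) = 1}` equals `⋃ₖ U₁ eₖ`; i.e. `N(x) = 1`
iff exactly one coordinate of `x` lies in `U₁` and all the others vanish. -/
theorem unit_sphere_eq :
    ({x : E | N x = 1} =
      ⋃ k : Fin 4, (fun u : A => u • e k) '' {u : A | u * conj u = 1}) ∧
    ∀ x : E, N x = 1 ↔ ∃ k, x k * conj (x k) = 1 ∧ ∀ j, j ≠ k → x j = 0 :=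
  ⟨Set.ext fun x =>
    (N_eq_one_iff x).trans (mem_iUnion_image_smul_e_iff {u | u * conj u = 1} x).symm,
    N_eq_one_iff⟩
end

section
/- For any cyclic permutation (i,j,k) of (1,2,3) and all a, b ∈ A one has (a e_i)·(b e_j) = a* b* e_k = −((b e_j)·(a e_i)). Consequently the multiplication · coincides with Yang's multiplication ∘ on all of E. -/
open LaurentPolynomial

/-- `(i,j,k)` is a cyclic permutation of `(1,2,3)`. -/
def Cyc (i j k : Fin 4) : Prop :=
  (i, j, k) = (1, 2, 3) ∨ (i, j, k) = (2, 3, 1) ∨ (i, j, k) = (3, 1, 2)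

/-!
Polarizing the Lagrange identity `N(xy) = N(x) N(y)` gives, for the polar form `⟨x, y⟩` of `N`,
`⟨xy, uw⟩ + ⟨xw, uy⟩ = ⟨x, u⟩ ⟨y, w⟩`. Since `⟨·, ·⟩` is nondegenerate on `E`, this yields the
identity `x(wy) + w(xy) = ⟨x, e₀⟩ wy + ⟨w, e₀⟩ xy - ⟨x, w⟩ y`. Taking `x = a e₀` shows that left
multiplication by a pure element (`x₀ = 0`) is conjugate-linear, and taking `y = e₀` shows that
orthogonal pure elements anticommute. These rules, with `e₀` as unit and the products of the
quaternion units, determine a multiplication on `E` completely, and Yang's multiplication obeys them.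
-/

noncomputable def normPolar (x y : E) : A := ∑ k, (x k * conj (y k) + conj (x k) * y k)

lemma smul_e_eq_single (a : A) (l : Fin 4) : a • e l = Pi.single l a := by
  simp [e, ← Pi.single_smul]

lemma smul_e_apply_zero {l : Fin 4} (hl : l ≠ 0) (a : A) : (a • e l) 0 = 0 := by
  rw [smul_e_eq_single, Pi.single_eq_of_ne' hl]

lemma e_apply_zero {l : Fin 4} (hl : l ≠ 0) : e l 0 = 0 := Pi.single_eq_of_ne' hl 1

lemma two_ne_zero_laurent : (2 : A) ≠ 0 := by
  have h := (Polynomial.toLaurent_ne_zero (f := (2 : Polynomial ℤ))).mpr two_ne_zero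
  rwa [map_ofNat] at h

lemma eq_smul_e_add (x : E) : x = x 0 • e 0 + x 1 • e 1 + x 2 • e 2 + x 3 • e 3 := by
  funext k; fin_cases k <;> simp [e]

lemma N_add (x y : E) : N (x + y) = N x + N y + normPolar x y := by
  simp only [N, normPolar, Pi.add_apply, map_add, ← Finset.sum_add_distrib]
  exact Finset.sum_congr rfl fun _ _ => by ring

lemma normPolar_comm (x y : E) : normPolar x y = normPolar y x :=
  Finset.sum_congr rfl fun _ _ => by ring

lemma normPolar_add_left (x y w : E) : normPolar (x + y) w = normPolar x w + normPolar y w := by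
  simp only [normPolar, Pi.add_apply, map_add, ← Finset.sum_add_distrib]
  exact Finset.sum_congr rfl fun _ _ => by ring

lemma normPolar_add_right (x y w : E) : normPolar x (y + w) = normPolar x y + normPolar x w := by
  rw [normPolar_comm, normPolar_add_left, normPolar_comm y, normPolar_comm w]

lemma normPolar_sub_left (x y w : E) : normPolar (x - y) w = normPolar x w - normPolar y w := by
  simp only [normPolar, Pi.sub_apply, map_sub, ← Finset.sum_sub_distrib]
  exact Finset.sum_congr rfl fun _ _ => by ring

lemma conj_normPolar (x y : E) : conj (normPolar x y) = normPolar x y := by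
  simp only [normPolar, map_sum, map_add, map_mul, conj_conj]
  exact Finset.sum_congr rfl fun _ _ => by ring

lemma normPolar_smul_left {c : A} (hc : conj c = c) (x w : E) :
    normPolar (c • x) w = c * normPolar x w := by
  simp only [normPolar, Pi.smul_apply, smul_eq_mul, map_mul, hc, Finset.mul_sum]
  exact Finset.sum_congr rfl fun _ _ => by ring

lemma normPolar_smul_e (x : E) (l : Fin 4) (a : A) :
    normPolar x (a • e l) = x l * conj a + conj (x l) * a := by
  rw [normPolar, smul_e_eq_single, Finset.sum_eq_single l (fun k _ hk => by simp [hk]) (by simp)]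
  simp

lemma normPolar_e (x : E) (l : Fin 4) : normPolar x (e l) = x l + conj (x l) := by
  simpa using normPolar_smul_e x l 1

lemma normPolar_smul_e_e (a : A) (l : Fin 4) : normPolar (a • e l) (e l) = a + conj a := by
  rw [normPolar_e, smul_e_eq_single, Pi.single_eq_same]

lemma normPolar_smul_e_smul_e_of_ne {i j : Fin 4} (hij : i ≠ j) (a b : A) :
    normPolar (a • e i) (b • e j) = 0 := by
  rw [normPolar_smul_e, smul_e_eq_single, Pi.single_eq_of_ne' hij, map_zero, zero_mul, zero_mul,
    add_zero]

lemma normPolar_e_zero_of_apply_zero {x : E} (hx : x 0 = 0) : normPolar x (e 0) = 0 := by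
  rw [normPolar_e, hx, map_zero, add_zero]

lemma eq_zero_of_normPolar_eq_zero {x : E} (h : ∀ u, normPolar x u = 0) : x = 0 := by
  funext l
  have h₁ := h (e l)
  have h₂ := h ((T 1 : A) • e l)
  rw [normPolar_e] at h₁
  rw [normPolar_smul_e, show conj (T 1) = T (-1) by simp [conj]] at h₂
  have hT : (T (-1) : A) - T 1 ≠ 0 := by
    rw [sub_ne_zero]; intro hT; simpa using congrArg (fun f : A => f.coeff 1) hT
  have : x l * (T (-1) - T 1) = 0 := by linear_combination h₂ - T 1 * h₁
  simpa [hT] using this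

lemma eq_of_normPolar_eq {x y : E} (h : ∀ u, normPolar x u = normPolar y u) : x = y :=
  sub_eq_zero.mp <| eq_zero_of_normPolar_eq_zero fun u => by rw [normPolar_sub_left, h, sub_self]

section Lagrange

variable {mul : E →ₗ[A0] E →ₗ[A0] E} (hL : ∀ x y : E, N (mul x y) = N x * N y)
include hL

lemma normPolar_mul_mul_left (x y w : E) :
    normPolar (mul x y) (mul x w) = N x * normPolar y w := by
  have h := hL x (y + w)
  rw [map_add, N_add, N_add] at h
  linear_combination h - hL x y - hL x w

lemma normPolar_mul_mul_right (x u y : E) :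
    normPolar (mul x y) (mul u y) = normPolar x u * N y := by
  have h := hL (x + u) y
  rw [map_add, LinearMap.add_apply, N_add, N_add] at h
  linear_combination h - hL x y - hL u y

lemma normPolar_mul_add_normPolar_mul (x y u w : E) :
    normPolar (mul x y) (mul u w) + normPolar (mul x w) (mul u y) =
      normPolar x u * normPolar y w := by
  have h := hL (x + u) (y + w)
  simp only [map_add, LinearMap.add_apply] at h
  rw [N_add, N_add, N_add, N_add, N_add, normPolar_add_left, normPolar_add_right,
    normPolar_add_right] at h
  linear_combination h - hL x y - hL x w - hL u y - hL u w
    - normPolar_mul_mul_left hL x y w - normPolar_mul_mul_left hL u y w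
    - normPolar_mul_mul_right hL x u y - normPolar_mul_mul_right hL x u w
    + normPolar_comm (mul x w) (mul u y)

variable (hone_mul : ∀ x : E, mul (e 0) x = x)
include hone_mul

lemma normPolar_mul_add_normPolar_mul_e_zero (x y w : E) :
    normPolar (mul x y) w + normPolar (mul x w) y = normPolar x (e 0) * normPolar y w := by
  simpa only [hone_mul] using normPolar_mul_add_normPolar_mul hL x y (e 0) w

lemma mul_mul_add_mul_mul (x w y : E) :
    mul x (mul w y) + mul w (mul x y) =
      normPolar x (e 0) • mul w y + normPolar w (e 0) • mul x y - normPolar x w • y := by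
  refine eq_of_normPolar_eq fun u => ?_
  rw [normPolar_add_left, normPolar_sub_left, normPolar_add_left,
    normPolar_smul_left (conj_normPolar x (e 0)), normPolar_smul_left (conj_normPolar w (e 0)),
    normPolar_smul_left (conj_normPolar x w)]
  linear_combination normPolar_mul_add_normPolar_mul_e_zero hL hone_mul x (mul w y) u
    + normPolar_mul_add_normPolar_mul_e_zero hL hone_mul w (mul x y) u
    - normPolar_mul_add_normPolar_mul hL x u w y - normPolar_comm (mul w u) (mul x y)
    - normPolar x w * normPolar_comm u y

lemma mul_smul_of_apply_zero (hA : ∀ (a : A) (y : E), mul (a • e 0) y = a • y) {w : E}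
    (hw : w 0 = 0) (a : A) (y : E) : mul w (a • y) = conj a • mul w y := by
  have h := mul_mul_add_mul_mul hL hone_mul (a • e 0) w y
  have h₁ : normPolar (a • e 0) (e 0) = a + conj a := by
    rw [normPolar_comm, normPolar_smul_e]; simp [e, add_comm]
  have h₂ : normPolar (a • e 0) w = 0 := by
    rw [normPolar_comm, normPolar_smul_e, hw, map_zero, zero_mul, zero_mul, add_zero]
  rw [hA, hA, h₁, h₂, normPolar_e_zero_of_apply_zero hw, zero_smul, zero_smul, add_zero,
    sub_zero, add_smul] at h
  exact add_left_cancel h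

lemma mul_add_mul_swap_of_apply_zero (hmul_one : ∀ x : E, mul x (e 0) = x) {x w : E}
    (hx : x 0 = 0) (hw : w 0 = 0) : mul x w + mul w x = -(normPolar x w • e 0) := by
  have h := mul_mul_add_mul_mul hL hone_mul x w (e 0)
  rwa [hmul_one, hmul_one, normPolar_e_zero_of_apply_zero hx, normPolar_e_zero_of_apply_zero hw,
    zero_smul, zero_smul, zero_add, zero_sub] at h

end Lagrange

lemma Cyc.ne {i j k : Fin 4} (h : Cyc i j k) : i ≠ 0 ∧ j ≠ 0 ∧ i ≠ j := by
  rcases h with h | h | h <;> simp only [Prod.mk.injEq] at h <;> simp [h.1, h.2.1]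

lemma Cyc.trichotomy {l : Fin 4} (hl : l ≠ 0) (n : Fin 4) :
    n = 0 ∨ n = l ∨ (∃ k, Cyc l n k) ∨ ∃ k, Cyc n l k := by
  fin_cases l <;> fin_cases n <;> simp [Cyc] at hl ⊢

structure YangAxioms (m : E → E → E) : Prop where
  add_left : ∀ x x' y, m (x + x') y = m x y + m x' y
  add_right : ∀ x y y', m x (y + y') = m x y + m x y'
  smul_e_zero_mul : ∀ (a : A) y, m (a • e 0) y = a • y
  mul_e_zero : ∀ x, m x (e 0) = x
  mul_smul_of_apply_zero : ∀ x, x 0 = 0 → ∀ (a : A) y, m x (a • y) = conj a • m x y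
  mul_add_mul_swap_of_apply_zero : ∀ x w, x 0 = 0 → w 0 = 0 →
    m x w + m w x = -(normPolar x w • e 0)
  e_mul_e : ∀ i j k, Cyc i j k → m (e i) (e j) = e k

namespace YangAxioms

variable {m : E → E → E} (hm : YangAxioms m)
include hm

lemma mul_swap_of_normPolar_eq_zero {x w : E} (hx : x 0 = 0) (hw : w 0 = 0)
    (hxw : normPolar x w = 0) : m x w = -m w x := by
  simpa [hxw, eq_neg_iff_add_eq_zero] using hm.mul_add_mul_swap_of_apply_zero x w hx hw

lemma smul_e_mul_smul_e_swap_of_ne {i j : Fin 4} (hi : i ≠ 0) (hj : j ≠ 0) (hij : i ≠ j)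
    (a b : A) : m (a • e i) (b • e j) = -m (b • e j) (a • e i) :=
  hm.mul_swap_of_normPolar_eq_zero (smul_e_apply_zero hi a) (smul_e_apply_zero hj b)
    (normPolar_smul_e_smul_e_of_ne hij a b)

lemma e_mul_e_self {l : Fin 4} (hl : l ≠ 0) : m (e l) (e l) = -e 0 := by
  have h := hm.mul_add_mul_swap_of_apply_zero (e l) (e l) (e_apply_zero hl) (e_apply_zero hl)
  have h2 : normPolar (e l) (e l) = 2 := by
    rw [normPolar_e, e, Pi.single_eq_same, map_one, one_add_one_eq_two]
  rw [h2, ← two_smul A, ← smul_neg] at h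
  exact smul_right_injective E two_ne_zero_laurent h

lemma smul_e_mul_e_self {l : Fin 4} (hl : l ≠ 0) (a : A) : m (a • e l) (e l) = -(a • e 0) := by
  have h := hm.mul_add_mul_swap_of_apply_zero (a • e l) (e l) (smul_e_apply_zero hl a)
    (e_apply_zero hl)
  rw [hm.mul_smul_of_apply_zero _ (e_apply_zero hl), hm.e_mul_e_self hl, normPolar_smul_e_e,
    add_smul, neg_add, smul_neg] at h
  exact add_right_cancel h

lemma smul_e_mul_smul_e {i j k : Fin 4} (h : Cyc i j k) (a b : A) :
    m (a • e i) (b • e j) = (conj a * conj b) • e k := by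
  obtain ⟨hi, hj, hij⟩ := h.ne
  have hji : m (e j) (e i) = -e k := by
    simpa [hm.e_mul_e i j k h] using hm.smul_e_mul_smul_e_swap_of_ne hj hi hij.symm 1 1
  rw [hm.mul_smul_of_apply_zero _ (smul_e_apply_zero hi a), ← one_smul A (e j),
    hm.smul_e_mul_smul_e_swap_of_ne hi hj hij, hm.mul_smul_of_apply_zero _ (smul_e_apply_zero hj 1),
    one_smul, hji]
  simp only [smul_neg, neg_neg]
  rw [smul_smul, mul_comm]

theorem unique {m₂ : E → E → E} (h₂ : YangAxioms m₂) : m = m₂ := by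
  have on_basis : ∀ {l : Fin 4} (a : A) (n : Fin 4), l ≠ 0 →
      m (a • e l) (e n) = m₂ (a • e l) (e n) := by
    intro l a n hl
    rcases Cyc.trichotomy hl n with rfl | rfl | ⟨k, hk⟩ | ⟨k, hk⟩
    · rw [hm.mul_e_zero, h₂.mul_e_zero]
    · rw [hm.smul_e_mul_e_self hl, h₂.smul_e_mul_e_self hl]
    · rw [← one_smul A (e n), hm.smul_e_mul_smul_e hk, h₂.smul_e_mul_smul_e hk]
    · obtain ⟨hn, -, hnl⟩ := hk.ne
      rw [← one_smul A (e n), hm.smul_e_mul_smul_e_swap_of_ne hl hn hnl.symm,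
        h₂.smul_e_mul_smul_e_swap_of_ne hl hn hnl.symm, hm.smul_e_mul_smul_e hk,
        h₂.smul_e_mul_smul_e hk]
  have on_pure : ∀ {l : Fin 4} (a : A) (y : E), l ≠ 0 → m (a • e l) y = m₂ (a • e l) y := by
    intro l a y hl
    rw [eq_smul_e_add y]
    simp only [hm.add_right, h₂.add_right, hm.mul_smul_of_apply_zero _ (smul_e_apply_zero hl a),
      h₂.mul_smul_of_apply_zero _ (smul_e_apply_zero hl a), on_basis a _ hl]
  funext x y
  rw [eq_smul_e_add x]
  simp only [hm.add_left, h₂.add_left, hm.smul_e_zero_mul, h₂.smul_e_zero_mul,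
    on_pure _ y (by decide : (1 : Fin 4) ≠ 0), on_pure _ y (by decide : (2 : Fin 4) ≠ 0),
    on_pure _ y (by decide : (3 : Fin 4) ≠ 0)]

end YangAxioms

lemma yangAxioms_yang : YangAxioms yang where
  add_left x x' y := by funext k; fin_cases k <;> simp [yang, map_add] <;> ring
  add_right x y y' := by funext k; fin_cases k <;> simp [yang, map_add] <;> ring
  smul_e_zero_mul a y := by funext k; fin_cases k <;> simp [yang, e]
  mul_e_zero x := by funext k; fin_cases k <;> simp [yang, e]
  mul_smul_of_apply_zero x hx a y := by
    funext k; fin_cases k <;> simp [yang, hx, map_mul] <;> ring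
  mul_add_mul_swap_of_apply_zero x w hx hw := by
    funext k; fin_cases k <;> simp [yang, normPolar, Fin.sum_univ_four, e, hx, hw] <;> ring
  e_mul_e i j k h := by
    rcases h with h | h | h <;> simp only [Prod.mk.injEq] at h <;> obtain ⟨rfl, rfl, rfl⟩ := h <;>
      funext n <;> fin_cases n <;> simp [yang, e]

lemma yangAxioms_of_lagrange {mul : E →ₗ[A0] E →ₗ[A0] E}
    (hL : ∀ x y : E, N (mul x y) = N x * N y)
    (hid : ∀ x : E, mul (e 0) x = x ∧ mul x (e 0) = x)
    (hA : ∀ (a : A) (y : E), mul (a • e 0) y = a • y)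
    (hq : ∀ i j k : Fin 4, Cyc i j k → mul (e i) (e j) = e k) :
    YangAxioms fun x y => mul x y where
  add_left x x' y := by simp only [map_add, LinearMap.add_apply]
  add_right x y y' := map_add _ y y'
  smul_e_zero_mul := hA
  mul_e_zero x := (hid x).2
  mul_smul_of_apply_zero _ hw := mul_smul_of_apply_zero hL (fun x => (hid x).1) hA hw
  mul_add_mul_swap_of_apply_zero _ _ hx hw :=
    mul_add_mul_swap_of_apply_zero hL (fun x => (hid x).1) (fun x => (hid x).2) hx hw
  e_mul_e := hq

/-- Lemma 4.8: for any cyclic permutation `(i,j,k)` of `(1,2,3)` and all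
`a, b ∈ A`, `(a eᵢ)·(b eⱼ) = a* b* eₖ = −((b eⱼ)·(a eᵢ))`.  Consequently the
multiplication `·` coincides with Yang's multiplication `∘` on all of `E`. -/
theorem coincides_with_yang (mul : E →ₗ[A0] E →ₗ[A0] E)
    (hL : ∀ x y : E, N (mul x y) = N x * N y)
    (hid : ∀ x : E, mul (e 0) x = x ∧ mul x (e 0) = x)
    (hA : ∀ (a : A) (y : E), mul (a • e 0) y = a • y)
    (hq : ∀ i j k : Fin 4, Cyc i j k →
      mul (e i) (e j) = e k ∧ mul (e j) (e i) = -e k) :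
    (∀ i j k : Fin 4, Cyc i j k → ∀ a b : A,
      mul (a • e i) (b • e j) = (conj a * conj b) • e k ∧
      mul (a • e i) (b • e j) = -mul (b • e j) (a • e i)) ∧
    ∀ x y : E, mul x y = yang x y := by
  have hm := yangAxioms_of_lagrange hL hid hA fun i j k h => (hq i j k h).1
  refine ⟨fun i j k h a b => ⟨hm.smul_e_mul_smul_e h a b, ?_⟩, fun x y => ?_⟩
  · obtain ⟨hi, hj, hij⟩ := h.ne
    exact hm.smul_e_mul_smul_e_swap_of_ne hi hj hij a b
  · exact congrFun₂ (hm.unique yangAxioms_yang) x y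
end
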